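/- Let Z be a contact element for l ⊆ g and m^{10} a holomorphic subspace of m^ℂ, with m^{01} its complex conjugate. Let q = N_g(l^ℂ + m^{01}) be the normalizer in g of the subalgebra l^ℂ + m^{01}. Then q ∩ m = {0}; consequently q ⊆ l + ℝZ and dim q/l ≤ 1. (In particular, the image G/Q of the anticanonical map φ(gL) = Ad_g(l^ℂ + m^{01}) satisfies dim Q/L ≤ 1.) -/

import Mathlib

noncomputable section

open scoped TensorProduct

namespace CRPaper

variable {g : Type} [LieRing g] [LieAlgebra ℝ g] [FiniteDimensional ℝ g]

/-- `B` is an `Ad`-invariant (Euclidean) inner product on the real Lie algebra `g`;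
its existence encodes that `g` is a *compact* Lie algebra. -/
structure IsInvariantInner (B : g →ₗ[ℝ] g →ₗ[ℝ] ℝ) : Prop where
  symm : ∀ x y : g, B x y = B y x
  posdef : ∀ x : g, x ≠ 0 → 0 < B x x
  invariant : ∀ x y z : g, B ⁅x, y⁆ z + B y ⁅x, z⁆ = 0

/-- The canonical inclusion of `g` in its complexification `g^ℂ = ℂ ⊗[ℝ] g`. -/
def inclL : g →ₗ[ℝ] ℂ ⊗[ℝ] g := TensorProduct.mk ℝ ℂ g 1

/-- Conjugation of the complexification `g^ℂ` with respect to the real form `g`,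
as an `ℝ`-linear map. -/
def conjA : ℂ ⊗[ℝ] g →ₗ[ℝ] ℂ ⊗[ℝ] g :=
  TensorProduct.map Complex.conjAe.toLinearMap LinearMap.id

/-- `Z` is a *contact element* for the subalgebra `l ⊆ g`:  it is a nonzero vector,
orthogonal to `l` w.r.t. `B`, whose centralizer is exactly `l ⊕ ℝ Z`. -/
structure IsContactElement (B : g →ₗ[ℝ] g →ₗ[ℝ] ℝ) (l : LieSubalgebra ℝ g) (Z : g) :
    Prop where
  ne_zero : Z ≠ 0
  orth : ∀ y ∈ l, B Z y = 0
  cent : ∀ x : g, ⁅x, Z⁆ = 0 ↔ ∃ y ∈ l, ∃ c : ℝ, x = y + c • Z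

/-- The subspace `k = l + ℝ Z` (the centralizer of the contact element). -/
def kSub (l : LieSubalgebra ℝ g) (Z : g) : Submodule ℝ g :=
  l.toSubmodule ⊔ (Submodule.span ℝ {Z})

/-- The subspace `m`: the `B`-orthogonal complement of `k = l + ℝ Z` in `g`. -/
def mSub (B : g →ₗ[ℝ] g →ₗ[ℝ] ℝ) (l : LieSubalgebra ℝ g) (Z : g) : Submodule ℝ g where
  carrier := {x : g | ∀ y ∈ kSub l Z, B x y = 0}
  add_mem' := by intro a b ha hb y hy; rw [map_add, LinearMap.add_apply, ha y hy, hb y hy,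
    add_zero]
  zero_mem' := by intro y hy; rw [map_zero, LinearMap.zero_apply]
  smul_mem' := by intro c a ha y hy; rw [map_smul, LinearMap.smul_apply, ha y hy, smul_zero]

/-- Complexification of a real subspace of `g`, as a subspace of `g^ℂ`. -/
def cx (p : Submodule ℝ g) : Submodule ℂ (ℂ ⊗[ℝ] g) := p.baseChange ℂ

/-- The conjugate of a complex subspace of `g^ℂ` (w.r.t. the real form `g`). -/
def conjSpan (W : Submodule ℂ (ℂ ⊗[ℝ] g)) : Submodule ℂ (ℂ ⊗[ℝ] g) :=
  Submodule.span ℂ (conjA '' (W : Set (ℂ ⊗[ℝ] g)))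

/-- A *holomorphic subspace* `m¹⁰ ⊆ m^ℂ`: it intersects its conjugate `m⁰¹` trivially,
together with `m⁰¹` it spans `m^ℂ`, and `l^ℂ + m¹⁰` is a subalgebra of `g^ℂ`
(the integrability condition).  Holomorphic subspaces correspond exactly to the
invariant CR structures `(D_Z, J)` on `G/L` subordinate to the invariant contact
structure `D_Z`. -/
structure IsHolo (B : g →ₗ[ℝ] g →ₗ[ℝ] ℝ) (l : LieSubalgebra ℝ g) (Z : g)
    (m10 : Submodule ℂ (ℂ ⊗[ℝ] g)) : Prop where
  le : m10 ≤ cx (mSub B l Z)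
  inf_conj : m10 ⊓ conjSpan m10 = ⊥
  sup_conj : cx (mSub B l Z) ≤ m10 ⊔ conjSpan m10
  subalg : ∀ x ∈ cx l.toSubmodule ⊔ m10, ∀ y ∈ cx l.toSubmodule ⊔ m10,
      ⁅x, y⁆ ∈ cx l.toSubmodule ⊔ m10

/-- The invariant CR structure determined by the holomorphic subspace `m¹⁰` is *standard*:
`m¹⁰` is invariant under the adjoint action of `k = l + ℝ Z`. -/
def IsStandard (l : LieSubalgebra ℝ g) (Z : g) (m10 : Submodule ℂ (ℂ ⊗[ℝ] g)) : Prop :=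
  ∀ x ∈ kSub l Z, ∀ v ∈ m10, ⁅inclL x, v⁆ ∈ m10

/-- A Cartan subalgebra of the compact Lie algebra `g`: a maximal abelian subalgebra. -/
structure IsCartan (h : LieSubalgebra ℝ g) : Prop where
  abelian : ∀ x ∈ h, ∀ y ∈ h, ⁅x, y⁆ = 0
  maximal : ∀ x : g, (∀ y ∈ h, ⁅x, y⁆ = 0) → x ∈ h

/-- The root space of `(g^ℂ, h^ℂ)` attached to the vector `t ∈ h ⊆ g`;  here a root `α` is
identified with the vector `t = t_α ∈ h` such that `α(x) = i·B(t, x)` for all `x ∈ h`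
(the identification being made via the invariant inner product `B`). -/
def rootSpace (B : g →ₗ[ℝ] g →ₗ[ℝ] ℝ) (h : LieSubalgebra ℝ g) (t : g) :
    Submodule ℂ (ℂ ⊗[ℝ] g) where
  carrier := {X | ∀ x ∈ h, ⁅inclL x, X⁆ = (Complex.I * (B t x : ℝ)) • X}
  add_mem' := by
    intro a b ha hb x hx
    have h1 : ⁅inclL x, a + b⁆ = ⁅inclL x, a⁆ + ⁅inclL x, b⁆ := lie_add (inclL x) a b
    rw [h1, ha x hx, hb x hx, smul_add]
  zero_mem' := by
    intro x hx
    have h1 : ⁅inclL x, (0 : ℂ ⊗[ℝ] g)⁆ = 0 := lie_zero (inclL x)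
    rw [h1, smul_zero]
  smul_mem' := by
    intro c a ha x hx
    have h1 : ⁅inclL x, c • a⁆ = c • ⁅inclL x, a⁆ := lie_smul c (inclL x) a
    rw [h1, ha x hx, smul_comm]

/-- `t ∈ h` represents a root of `(g^ℂ, h^ℂ)` via `α = i·B(t, ·)`. -/
def IsRootVec (B : g →ₗ[ℝ] g →ₗ[ℝ] ℝ) (h : LieSubalgebra ℝ g) (t : g) : Prop :=
  t ∈ h ∧ t ≠ 0 ∧ rootSpace B h t ≠ ⊥

/-- The set of (vectors in `h` representing) roots of `(g^ℂ, h^ℂ)`. -/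
def rootSet (B : g →ₗ[ℝ] g →ₗ[ℝ] ℝ) (h : LieSubalgebra ℝ g) : Set g :=
  {t | IsRootVec B h t}

/-- Since the contact form `ϑ = -i·B(Z,·)` corresponds to (a multiple of) the vector `Z`
under the identification of roots with vectors, two roots `a`, `b` are *ϑ-congruent*
iff they differ by a real multiple of `Z`. -/
def ThetaCongruent (Z : g) (a b : g) : Prop := ∃ lam : ℝ, b = a + lam • Z

/-- The contact form `ϑ = -i·B(Z,·)` is proportional to the root (vector) `t`. -/
def PropToRoot (Z t : g) : Prop := ∃ c : ℝ, c ≠ 0 ∧ Z = c • t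

/-- A subset `P` of the set of roots `R` is a positive system. -/
structure IsPositiveSystem (R P : Set g) : Prop where
  subset : P ⊆ R
  total : ∀ t ∈ R, t ∈ P ∨ -t ∈ P
  not_neg : ∀ t ∈ P, -t ∉ P
  closed : ∀ s ∈ P, ∀ t ∈ P, s + t ∈ R → s + t ∈ P

/-- `W` is a submodule for (i.e. invariant under the bracket action of) the
subspace `a ⊆ g^ℂ`. -/
def IsInvSubmod (a W : Submodule ℂ (ℂ ⊗[ℝ] g)) : Prop :=
  ∀ x ∈ a, ∀ w ∈ W, ⁅x, w⁆ ∈ W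

/-- `W` is an irreducible `a`-submodule of `g^ℂ`. -/
def IsIrredOf (a W : Submodule ℂ (ℂ ⊗[ℝ] g)) : Prop :=
  W ≠ ⊥ ∧ IsInvSubmod a W ∧ ∀ W' ≤ W, IsInvSubmod a W' → W' = ⊥ ∨ W' = W

/-- The smallest `a`-invariant subspace of `g^ℂ` containing the vector `v`. -/
def genSubmod (a : Submodule ℂ (ℂ ⊗[ℝ] g)) (v : ℂ ⊗[ℝ] g) : Submodule ℂ (ℂ ⊗[ℝ] g) :=
  sInf {W | v ∈ W ∧ IsInvSubmod a W}

/-- `W` and `W'` are isomorphic as modules for the subspace `a ⊆ g^ℂ`. -/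
def ModIso (a W W' : Submodule ℂ (ℂ ⊗[ℝ] g)) : Prop :=
  ∃ f : (ℂ ⊗[ℝ] g) →ₗ[ℂ] (ℂ ⊗[ℝ] g),
    (∀ w ∈ W, f w ∈ W') ∧ (∀ w ∈ W, f w = 0 → w = 0) ∧
    (∀ w' ∈ W', ∃ w ∈ W, f w = w') ∧
    (∀ x ∈ a, ∀ w ∈ W, f ⁅x, w⁆ = ⁅x, f w⁆)

/-- `W ⊆ g^ℂ` has highest weight (represented by the vector) `t ∈ h`, with respect to the
positive system `P`: it contains a nonzero weight vector of weight `t` annihilated by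
all the root vectors of positive roots. -/
def HasHighestWeight (B : g →ₗ[ℝ] g →ₗ[ℝ] ℝ) (h : LieSubalgebra ℝ g) (P : Set g)
    (W : Submodule ℂ (ℂ ⊗[ℝ] g)) (t : g) : Prop :=
  ∃ v ∈ W ⊓ rootSpace B h t, v ≠ 0 ∧ ∀ s ∈ P, ∀ X ∈ rootSpace B h s, ⁅X, v⁆ = 0

/-- The real points of a complex subspace `W ⊆ g^ℂ`: `{x ∈ g | x ∈ W}`. -/
def realPts (W : Submodule ℂ (ℂ ⊗[ℝ] g)) : Submodule ℝ g :=
  (W.restrictScalars ℝ).comap inclL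

/-- The normalizer in `g` of the subspace `l^ℂ + m⁰¹ ⊆ g^ℂ`  (the Lie algebra of the
stabilizer of the image point of the anticanonical map `φ(gL) = Ad_g(l^ℂ + m⁰¹)`). -/
def normSet (l : LieSubalgebra ℝ g) (m10 : Submodule ℂ (ℂ ⊗[ℝ] g)) : Set g :=
  {x : g | ∀ v ∈ cx l.toSubmodule ⊔ conjSpan m10,
    ⁅inclL x, v⁆ ∈ cx l.toSubmodule ⊔ conjSpan m10}

/-- The homogeneous CR manifold determined by `(l, Z, m¹⁰)` admits a non-trivial CRF
fibration (i.e. it is *non-primitive*), encoded via Lemma 4.8 of the paper:  there is a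
proper parabolic subalgebra `p ⊆ g^ℂ` (parabolicity being encoded by `p + σ(p) = g^ℂ`,
its reductive part being `r = p ⊓ σ(p) = ((p ∩ g)^ℂ)`) such that `l^ℂ + m¹⁰ ⊆ p` and
`l^ℂ ⊊ r`. -/
def HasCRF (l : LieSubalgebra ℝ g) (m10 : Submodule ℂ (ℂ ⊗[ℝ] g)) : Prop :=
  ∃ p : Submodule ℂ (ℂ ⊗[ℝ] g),
    (∀ x ∈ p, ∀ y ∈ p, ⁅x, y⁆ ∈ p) ∧
    p ≠ ⊤ ∧
    (∀ v : ℂ ⊗[ℝ] g, ∃ a ∈ p, ∃ b ∈ p, v = a + conjA b) ∧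
    cx l.toSubmodule ⊔ m10 ≤ p ∧
    (∃ v ∈ p ⊓ conjSpan p, v ∉ cx l.toSubmodule)

/-- The CR structure is *circular*: it admits a CRF fibration with one-dimensional
(i.e. `S¹`) fiber `Q/L`, `Lie(Q) = r ∩ g`. -/
def IsCircular (l : LieSubalgebra ℝ g) (m10 : Submodule ℂ (ℂ ⊗[ℝ] g)) : Prop :=
  ∃ p : Submodule ℂ (ℂ ⊗[ℝ] g),
    (∀ x ∈ p, ∀ y ∈ p, ⁅x, y⁆ ∈ p) ∧
    p ≠ ⊤ ∧
    (∀ v : ℂ ⊗[ℝ] g, ∃ a ∈ p, ∃ b ∈ p, v = a + conjA b) ∧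
    cx l.toSubmodule ⊔ m10 ≤ p ∧
    Module.finrank ℝ (realPts (p ⊓ conjSpan p)) = Module.finrank ℝ l.toSubmodule + 1

end CRPaper


namespace CRPaper

section Aux

set_option linter.unusedSectionVars false

variable {g : Type} [LieRing g] [LieAlgebra ℝ g] [FiniteDimensional ℝ g]

lemma lieC_add (u a b : ℂ ⊗[ℝ] g) : ⁅u, a + b⁆ = ⁅u, a⁆ + ⁅u, b⁆ :=
  lie_add (L := ℂ ⊗[ℝ] g) (M := ℂ ⊗[ℝ] g) u a b

lemma lieC_zero (u : ℂ ⊗[ℝ] g) : ⁅u, (0 : ℂ ⊗[ℝ] g)⁆ = 0 :=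
  lie_zero (L := ℂ ⊗[ℝ] g) (M := ℂ ⊗[ℝ] g) u

lemma conjA_tmul (c : ℂ) (y : g) :
    conjA (c ⊗ₜ[ℝ] y) = (starRingEnd ℂ c) ⊗ₜ[ℝ] y := rfl

lemma conjA_conjA (v : ℂ ⊗[ℝ] g) : conjA (conjA v) = v := by
  induction v using TensorProduct.induction_on with
  | zero => simp
  | tmul c y => rw [conjA_tmul, conjA_tmul, Complex.conj_conj]
  | add a b ha hb => rw [map_add, map_add, ha, hb]

lemma conjA_smul (c : ℂ) (v : ℂ ⊗[ℝ] g) :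
    conjA (c • v) = (starRingEnd ℂ c) • conjA v := by
  induction v using TensorProduct.induction_on with
  | zero => simp
  | tmul d y =>
    rw [TensorProduct.smul_tmul', conjA_tmul, conjA_tmul, TensorProduct.smul_tmul']
    simp [smul_eq_mul, map_mul]
  | add a b ha hb => rw [smul_add, map_add, ha, hb, map_add, smul_add]

lemma conjA_lie (u v : ℂ ⊗[ℝ] g) : conjA ⁅u, v⁆ = ⁅conjA u, conjA v⁆ := by
  induction u using TensorProduct.induction_on with
  | zero => simp
  | add a b ha hb => rw [add_lie, map_add, ha, hb, map_add, add_lie]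
  | tmul c x =>
    induction v using TensorProduct.induction_on with
    | zero => rw [lieC_zero, map_zero, lieC_zero]
    | add a b ha hb => rw [lieC_add, map_add, ha, hb, map_add, lieC_add]
    | tmul d y =>
      rw [LieAlgebra.ExtendScalars.bracket_tmul, conjA_tmul, conjA_tmul, conjA_tmul,
        LieAlgebra.ExtendScalars.bracket_tmul, map_mul]

lemma inclL_eq (x : g) : inclL x = (1 : ℂ) ⊗ₜ[ℝ] x := rfl

lemma conjA_inclL (x : g) : conjA (inclL x) = inclL x := by
  rw [inclL_eq, conjA_tmul, map_one]

lemma inclL_lie (x y : g) : ⁅inclL x, inclL y⁆ = inclL ⁅x, y⁆ := by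
  rw [inclL_eq, inclL_eq, inclL_eq, LieAlgebra.ExtendScalars.bracket_tmul, one_mul]

lemma inclL_mem_cx {p : Submodule ℝ g} {y : g} (hy : y ∈ p) : inclL y ∈ cx p :=
  Submodule.tmul_mem_baseChange_of_mem 1 hy

lemma conjA_mem_cx {p : Submodule ℝ g} {v : ℂ ⊗[ℝ] g} (hv : v ∈ cx p) :
    conjA v ∈ cx p := by
  refine Submodule.span_induction (p := fun v _ => conjA v ∈ cx p) ?_ ?_ ?_ ?_ (by rwa [cx, Submodule.baseChange_eq_span] at hv)
  · rintro w ⟨y, hy, rfl⟩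
    show conjA (inclL y) ∈ cx p
    rw [conjA_inclL]
    exact inclL_mem_cx hy
  · simp
  · intro a b _ _ ha hb
    rw [map_add]; exact Submodule.add_mem _ ha hb
  · intro c a _ ha
    rw [conjA_smul]; exact Submodule.smul_mem _ _ ha

/-- The `ℂ`-linear functional `v ↦ B^ℂ(Z ⊗ 1, v)` on `g^ℂ`. -/
def phiZ (B : g →ₗ[ℝ] g →ₗ[ℝ] ℝ) (Z : g) : ℂ ⊗[ℝ] g →ₗ[ℂ] ℂ :=
  LinearMap.liftBaseChange ℂ (Complex.ofRealAm.toLinearMap ∘ₗ B Z)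

lemma phiZ_tmul (B : g →ₗ[ℝ] g →ₗ[ℝ] ℝ) (Z : g) (c : ℂ) (y : g) :
    phiZ B Z (c ⊗ₜ[ℝ] y) = c * (B Z y : ℂ) := by
  rw [phiZ, LinearMap.liftBaseChange_tmul]
  simp [Complex.ofRealAm, Algebra.ofId_apply, Complex.coe_algebraMap, smul_eq_mul]

lemma phiZ_inclL (B : g →ₗ[ℝ] g →ₗ[ℝ] ℝ) (Z : g) (y : g) :
    phiZ B Z (inclL y) = (B Z y : ℂ) := by
  rw [inclL_eq, phiZ_tmul, one_mul]

lemma phiZ_eq_zero_of_mem_cx {B : g →ₗ[ℝ] g →ₗ[ℝ] ℝ} {Z : g} {p : Submodule ℝ g}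
    (h : ∀ y ∈ p, B Z y = 0) {v : ℂ ⊗[ℝ] g} (hv : v ∈ cx p) : phiZ B Z v = 0 := by
  refine Submodule.span_induction (p := fun v _ => phiZ B Z v = 0) ?_ ?_ ?_ ?_ (by rwa [cx, Submodule.baseChange_eq_span] at hv)
  · rintro w ⟨y, hy, rfl⟩
    show phiZ B Z ((1 : ℂ) ⊗ₜ[ℝ] y) = 0
    rw [phiZ_tmul, h y hy]
    simp
  · simp
  · intro a b _ _ ha hb; rw [map_add, ha, hb, add_zero]
  · intro c a _ ha; rw [map_smul, ha, smul_zero]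

/-- Key step: every element of the normalizer centralizes `Z`, hence lies in `k = l + ℝZ`. -/
lemma normSet_subset_kSub {B : g →ₗ[ℝ] g →ₗ[ℝ] ℝ} (hB : IsInvariantInner B)
    {l : LieSubalgebra ℝ g} {Z : g} (hZ : IsContactElement B l Z)
    {m10 : Submodule ℂ (ℂ ⊗[ℝ] g)} (hm10 : IsHolo B l Z m10) :
    ∀ x ∈ normSet l m10, x ∈ kSub l Z := by
  intro x hx
  have hZk : Z ∈ kSub l Z :=
    Submodule.mem_sup_right (Submodule.mem_span_singleton_self Z)
  have hBZm : ∀ y ∈ mSub B l Z, B Z y = 0 := fun y hy => by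
    rw [hB.symm]; exact hy Z hZk
  set T : Submodule ℂ (ℂ ⊗[ℝ] g) := cx l.toSubmodule ⊔ cx (mSub B l Z) with hT
  have hphiT : ∀ v ∈ T, phiZ B Z v = 0 := by
    intro v hv
    obtain ⟨a, ha, b, hb, rfl⟩ := Submodule.mem_sup.mp hv
    rw [map_add, phiZ_eq_zero_of_mem_cx hZ.orth ha, phiZ_eq_zero_of_mem_cx hBZm hb,
      add_zero]
  have hm01m : conjSpan m10 ≤ cx (mSub B l Z) := by
    rw [conjSpan, Submodule.span_le]
    rintro w ⟨v, hv, rfl⟩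
    exact conjA_mem_cx (hm10.le hv)
  have hTle : cx l.toSubmodule ⊔ conjSpan m10 ≤ T := sup_le_sup_left hm01m _
  have hconjT : ∀ v ∈ T, conjA v ∈ T := by
    intro v hv
    obtain ⟨a, ha, b, hb, rfl⟩ := Submodule.mem_sup.mp hv
    rw [map_add]
    exact Submodule.add_mem _ (Submodule.mem_sup_left (conjA_mem_cx ha))
      (Submodule.mem_sup_right (conjA_mem_cx hb))
  -- `B(Z, [x, y]) = 0` for all `y ∈ m`
  have key : ∀ y ∈ mSub B l Z, B Z ⁅x, y⁆ = 0 := by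
    intro y hy
    have h1 : inclL y ∈ m10 ⊔ conjSpan m10 := hm10.sup_conj (inclL_mem_cx hy)
    obtain ⟨a, ha, b, hb, hab⟩ := Submodule.mem_sup.mp h1
    have hbT : phiZ B Z ⁅inclL x, b⁆ = 0 :=
      hphiT _ (hTle (hx _ (Submodule.mem_sup_right hb)))
    have hσa : conjA a ∈ conjSpan m10 := Submodule.subset_span ⟨a, ha, rfl⟩
    have h2 : ⁅inclL x, conjA a⁆ ∈ T := hTle (hx _ (Submodule.mem_sup_right hσa))
    have h3 : ⁅inclL x, a⁆ = conjA ⁅inclL x, conjA a⁆ := by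
      rw [conjA_lie, conjA_inclL, conjA_conjA]
    have haT : phiZ B Z ⁅inclL x, a⁆ = 0 := by
      rw [h3]; exact hphiT _ (hconjT _ h2)
    have h4 : ((B Z ⁅x, y⁆ : ℝ) : ℂ) = 0 := by
      rw [← phiZ_inclL B Z, ← inclL_lie, ← hab, lieC_add, map_add, haT, hbT, add_zero]
    exact_mod_cast h4
  -- `[x, Z] ∈ m`
  have hxZm : ⁅x, Z⁆ ∈ mSub B l Z := by
    intro w hw
    obtain ⟨a, ha, b, hb, rfl⟩ := Submodule.mem_sup.mp hw
    obtain ⟨c, rfl⟩ := Submodule.mem_span_singleton.mp hb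
    have haZ : ⁅a, Z⁆ = 0 := (hZ.cent a).mpr ⟨a, ha, 0, by simp⟩
    have hwZ : ⁅Z, a + c • Z⁆ = 0 := by
      rw [lie_add, lie_smul, lie_self, smul_zero, add_zero, ← lie_skew, haZ, neg_zero]
    have := hB.invariant Z x (a + c • Z)
    rw [hwZ, map_zero, add_zero] at this
    rw [← lie_skew, map_neg, LinearMap.neg_apply, this, neg_zero]
  -- `B([x,Z], [x,Z]) = 0`, hence `[x, Z] = 0`
  have h5 : B ⁅x, Z⁆ ⁅x, Z⁆ = 0 := by
    have := hB.invariant x Z ⁅x, Z⁆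
    rw [key _ hxZm, add_zero] at this
    exact this
  have h6 : ⁅x, Z⁆ = 0 := by
    by_contra h
    exact absurd h5 (ne_of_gt (hB.posdef _ h))
  obtain ⟨yl, hyl, c, rfl⟩ := (hZ.cent x).mp h6
  exact Submodule.add_mem _ (Submodule.mem_sup_left hyl)
    (Submodule.mem_sup_right (Submodule.smul_mem _ c (Submodule.mem_span_singleton_self Z)))

end Aux

end CRPaper

namespace CRPaper

/-- Lemma 4.10.  Let `Z` be a contact element for `l ⊆ g` and `m¹⁰` a
holomorphic subspace of `m^ℂ`, and let `q = N_g(l^ℂ + m⁰¹)` be the normalizer in `g` of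
`l^ℂ + m⁰¹`.  Then `q ∩ m = {0}`; consequently `q ⊆ l + ℝZ` and `dim q/l ≤ 1`
(so the image `G/Q` of the anticanonical map satisfies `dim Q/L ≤ 1`). -/
theorem stmt_7 {g : Type} [LieRing g] [LieAlgebra ℝ g] [FiniteDimensional ℝ g]
    (B : g →ₗ[ℝ] g →ₗ[ℝ] ℝ) (hB : IsInvariantInner B)
    (l : LieSubalgebra ℝ g) (Z : g) (hZ : IsContactElement B l Z)
    (m10 : Submodule ℂ (ℂ ⊗[ℝ] g)) (hm10 : IsHolo B l Z m10) :
    (∀ x ∈ normSet l m10, x ∈ mSub B l Z → x = 0) ∧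
    (normSet l m10 ⊆ (kSub l Z : Set g)) ∧
    Module.finrank ℝ (Submodule.span ℝ (normSet l m10)) ≤
      Module.finrank ℝ l.toSubmodule + 1 := by
  have hsub : ∀ x ∈ normSet l m10, x ∈ kSub l Z := normSet_subset_kSub hB hZ hm10
  refine ⟨?_, hsub, ?_⟩
  · intro x hxn hxm
    have hk : x ∈ kSub l Z := hsub x hxn
    have h0 : B x x = 0 := hxm x hk
    by_contra h
    exact absurd h0 (ne_of_gt (hB.posdef x h))
  · have h1 : Submodule.span ℝ (normSet l m10) ≤ kSub l Z :=
      Submodule.span_le.mpr hsub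
    have h2 : Module.finrank ℝ (Submodule.span ℝ (normSet l m10)) ≤
        Module.finrank ℝ (kSub l Z) := Submodule.finrank_mono h1
    have h3 := Submodule.finrank_sup_add_finrank_inf_eq l.toSubmodule
      (Submodule.span ℝ {Z})
    have h4 : Module.finrank ℝ (Submodule.span ℝ ({Z} : Set g)) = 1 :=
      finrank_span_singleton hZ.ne_zero
    have h5 : Module.finrank ℝ (kSub l Z) ≤ Module.finrank ℝ l.toSubmodule + 1 := by
      rw [kSub]
      omega
    omega

end CRPaper
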